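/- arXiv:2507.09181 — 3 statements merged into one kernel-verified Lean document; each statement's English description precedes it below -/
import Mathlib

section
/- Let (Ω, F, P) be a nonatomic probability space, let Φ be an Orlicz function that is finite-valued, continuous and strictly increasing, and let H_Φ be the associated Orlicz premium on L∞₊. If H_Φ is cash-additive, i.e. H_Φ(X + h) = H_Φ(X) + h for every X ∈ L∞₊ and every constant h ≥ 0, then there exist constants a > 0, b > 0 and p ≥ 0 such that Φ(x) = 1 + a·((x−1)₊)^p − b·((x−1)₋)^p for all x ≥ 0, where (y)₊ = max(y,0) and (y)₋ = max(−y,0). -/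
open MeasureTheory Filter Set
open scoped ENNReal

noncomputable section

variable {Ω : Type*} [MeasurableSpace Ω]

/-- `X` belongs to `L^∞_+(P)`: it is measurable, `P`-a.s. nonnegative and
`P`-essentially bounded. -/
def MemLinftyPlus (P : Measure Ω) (X : Ω → ℝ) : Prop :=
  Measurable X ∧ (∀ᵐ ω ∂P, 0 ≤ X ω) ∧ ∃ C : ℝ, ∀ᵐ ω ∂P, X ω ≤ C

/-- `X` belongs to `L^∞_++(P)`: it is measurable, bounded away from `0` and
`P`-essentially bounded. -/
def MemLinftyPlusPlus (P : Measure Ω) (X : Ω → ℝ) : Prop :=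
  Measurable X ∧ (∃ c : ℝ, 0 < c ∧ ∀ᵐ ω ∂P, c ≤ X ω) ∧ ∃ C : ℝ, ∀ᵐ ω ∂P, X ω ≤ C

/-- An Orlicz function `Φ : [0,∞) → ℝ ∪ {±∞}`: nondecreasing, left-continuous,
`Φ(x) > -∞` for `x > 0`, `Φ(x) ≤ 1` for `0 ≤ x ≤ 1` and `Φ(x) > 1` for `x > 1`. -/
structure IsOrliczFunction (Φ : ℝ → EReal) : Prop where
  ne_bot : ∀ x : ℝ, 0 < x → Φ x ≠ ⊥
  le_one : ∀ x : ℝ, 0 ≤ x → x ≤ 1 → Φ x ≤ 1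
  one_lt : ∀ x : ℝ, 1 < x → 1 < Φ x
  mono : ∀ x y : ℝ, 0 ≤ x → x ≤ y → Φ x ≤ Φ y
  left_cont : ∀ x : ℝ, 0 < x → Φ x = ⨆ y : Set.Ico (0 : ℝ) x, Φ (y : ℝ)

/-- The nonnegative part of an extended real, as an extended nonnegative real. -/
def erealToENNReal (x : EReal) : ℝ≥0∞ :=
  if x = ⊤ then ⊤ else ENNReal.ofReal x.toReal

/-- Expectation of an extended-real-valued function: positive part minus negative part. -/
def eexp (P : Measure Ω) (f : Ω → EReal) : EReal :=
  ((∫⁻ ω, erealToENNReal (f ω) ∂P : ℝ≥0∞) : EReal)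
    - ((∫⁻ ω, erealToENNReal (-(f ω)) ∂P : ℝ≥0∞) : EReal)

/-- The (generalized) Orlicz premium `H_Φ(X) = inf {k > 0 | E[Φ(X/k)] ≤ 1}`, with the
convention `H_Φ(X) = 0` if `Φ(0) = -∞` and `P(X = 0) > 0`. -/
def orliczPremium (P : Measure Ω) (Φ : ℝ → EReal) (X : Ω → ℝ) : ℝ :=
  if Φ 0 = ⊥ ∧ 0 < P {ω | X ω = 0} then 0
  else sInf {k : ℝ | 0 < k ∧ eexp P (fun ω => Φ (X ω / k)) ≤ 1}

/-- Addition on `EReal` with the convention `(-∞) + (+∞) = +∞`. -/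
def eadd (a b : EReal) : EReal :=
  if (a = ⊥ ∧ b = ⊤) ∨ (a = ⊤ ∧ b = ⊥) then ⊤ else a + b

/-- Multiplication on `ℝ≥0∞` with the convention `0 * ∞ = ∞`. -/
def gmulE (a b : ℝ≥0∞) : ℝ≥0∞ :=
  if (a = 0 ∧ b = ⊤) ∨ (a = ⊤ ∧ b = 0) then ⊤ else a * b

/-!
Cash-additivity is tested on two-point variables `X = u·1_A + v·1_Aᶜ` with `P(A) = l`, which
exist by nonatomicity. The premium of such an `X` is the root `k` of
`l Φ(u/k) + (1-l) Φ(v/k) = 1`, so cash-additivity says that the roots move along with shifts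
`X ↦ X + h`. Writing `Φ(1 + t) = 1 + f(t)` and `Φ(1 - s) = 1 - g(s)`, and choosing `l` so that
the variable taking the values `1 + t` and `1 - s` has premium `1`, this forces
`f(r t) g(s) = f(t) g(r s)` for `r ∈ (0, 1]`. Hence `g` is proportional to `f` on `(0, 1]`
and `f / f(1)` is a continuous multiplicative function on `(0, ∞)`, that is, a power `x ^ p`.
-/

open Topology

section PowerFunctions

open Real

lemma exists_rpow_of_map_mul {C : ℝ → ℝ} (hpos : ∀ x, 0 < x → 0 < C x)
    (hc : ContinuousOn C (Ioi 0)) (hmul : ∀ x y, 0 < x → 0 < y → C (x * y) = C x * C y) :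
    ∃ p : ℝ, ∀ x, 0 < x → C x = x ^ p := by
  let L : ℝ →+ ℝ := AddMonoidHom.mk' (fun y => log (C (exp y))) fun x y => by
    rw [exp_add, hmul _ _ (exp_pos x) (exp_pos y),
      log_mul (hpos _ (exp_pos x)).ne' (hpos _ (exp_pos y)).ne']
  have hL : Continuous L := continuousOn_log.comp_continuous
    (hc.comp_continuous continuous_exp exp_pos) fun y => (hpos _ (exp_pos y)).ne'
  refine ⟨L 1, fun x hx => ?_⟩
  have hlin := map_real_smul L hL (log x) 1
  rw [smul_eq_mul, mul_one, smul_eq_mul] at hlin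
  calc C x = exp (L (log x)) := by simp [L, exp_log hx, exp_log (hpos x hx)]
    _ = x ^ L 1 := by rw [hlin, rpow_def_of_pos hx]

lemma map_mul_of_map_mul_of_le_one {C : ℝ → ℝ} (hpos : ∀ x, 0 < x → 0 < C x)
    (hmul : ∀ r t, 0 < r → r ≤ 1 → 0 < t → C (r * t) = C r * C t) {x y : ℝ} (hx : 0 < x)
    (hy : 0 < y) : C (x * y) = C x * C y := by
  rcases le_or_gt x 1 with hx1 | hx1
  · exact hmul x y hx hx1 hy
  rcases le_or_gt y 1 with hy1 | hy1
  · rw [mul_comm, hmul y x hy hy1 hx, mul_comm]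
  have hy' : y⁻¹ ≤ 1 := inv_le_one_of_one_le₀ hy1.le
  have hC1 : C 1 = 1 := by
    have h11 := hmul 1 1 one_pos le_rfl one_pos
    rw [mul_one] at h11
    exact (mul_left_cancel₀ (hpos 1 one_pos).ne' (h11.symm.trans (mul_one _).symm))
  have hinv : C y⁻¹ * C y = 1 := by
    rw [← hmul _ _ (inv_pos.2 hy) hy' hy, inv_mul_cancel₀ hy.ne', hC1]
  have hx' := hmul y⁻¹ (x * y) (inv_pos.2 hy) hy' (mul_pos hx hy)
  rw [show y⁻¹ * (x * y) = x by field_simp] at hx'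
  calc C (x * y) = (C y⁻¹ * C y) * C (x * y) := by rw [hinv, one_mul]
    _ = C x * C y := by rw [hx']; ring

end PowerFunctions

lemma csInf_setOf_le_of_strictAntiOn {G : ℝ → ℝ} {c k₀ : ℝ} (hG : StrictAntiOn G (Ioi 0))
    (hk₀ : 0 < k₀) (hc : G k₀ = c) : sInf {k | 0 < k ∧ G k ≤ c} = k₀ := by
  have hS : {k | 0 < k ∧ G k ≤ c} = Ici k₀ := by
    ext k
    refine ⟨fun ⟨hk, hGk⟩ => ?_, fun hk => ⟨hk₀.trans_le hk, ?_⟩⟩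
    · by_contra! hlt
      exact (hG hk hk₀ (not_le.1 hlt)).not_ge (hc ▸ hGk)
    · exact hc ▸ hG.antitoneOn hk₀ (hk₀.trans_le hk) hk
  rw [hS, csInf_Ici]

lemma eq_of_csInf_setOf_le_eq {G : ℝ → ℝ} {c k₀ : ℝ} (hG : AntitoneOn G (Ioi 0))
    (hGc : ContinuousAt G k₀) (hk₀ : 0 < k₀) (h : sInf {k | 0 < k ∧ G k ≤ c} = k₀) :
    G k₀ = c := by
  set S := {k | 0 < k ∧ G k ≤ c}
  have hS : S.Nonempty := by
    by_contra hS
    rw [not_nonempty_iff_eq_empty.1 hS, Real.sInf_empty] at h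
    exact hk₀.ne h
  have hbdd : BddBelow S := ⟨0, fun k hk => hk.1.le⟩
  apply le_antisymm
  · refine le_of_tendsto (hGc.mono_left nhdsWithin_le_nhds : Tendsto G (𝓝[>] k₀) _) ?_
    filter_upwards [self_mem_nhdsWithin] with k hk
    obtain ⟨s, hs, hsk⟩ := (csInf_lt_iff hbdd hS).1 (h ▸ hk)
    exact (hG hs.1 (hs.1.trans hsk) hsk.le).trans hs.2
  · refine ge_of_tendsto (hGc.mono_left nhdsWithin_le_nhds : Tendsto G (𝓝[<] k₀) _) ?_
    filter_upwards [Ioo_mem_nhdsLT hk₀] with k hk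
    by_contra! hGk
    exact hk.2.not_ge (h ▸ csInf_le hbdd ⟨hk.1, hGk.le⟩)

lemma erealToENNReal_coe (x : ℝ) : erealToENNReal x = ENNReal.ofReal x := by
  rw [erealToENNReal, if_neg (EReal.coe_ne_top x), EReal.toReal_coe]

lemma eexp_coe {P : Measure Ω} {f : Ω → ℝ} (hf : Integrable f P) :
    eexp P (fun ω => (f ω : EReal)) = ((∫ ω, f ω ∂P : ℝ) : EReal) := by
  have hneg := hf.neg.lintegral_lt_top.ne
  simp only [Pi.neg_apply] at hneg
  simp only [eexp, ← EReal.coe_neg, erealToENNReal_coe]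
  rw [integral_eq_lintegral_pos_part_sub_lintegral_neg_part hf, EReal.coe_sub,
    EReal.coe_ennreal_toReal hf.lintegral_lt_top.ne, EReal.coe_ennreal_toReal hneg]

section Binary

variable {P : Measure Ω} {A : Set Ω} [DecidablePred (· ∈ A)]

lemma integrable_ite_mem [IsFiniteMeasure P] (hA : MeasurableSet A) (a b : ℝ) :
    Integrable (fun ω => if ω ∈ A then a else b) P :=
  Integrable.piecewise hA integrableOn_const integrableOn_const

variable [IsProbabilityMeasure P]

lemma integral_ite_mem (hA : MeasurableSet A) (a b : ℝ) :
    ∫ ω, (if ω ∈ A then a else b) ∂P = P.real A * a + (1 - P.real A) * b := by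
  rw [← probReal_compl_eq_one_sub hA, ← smul_eq_mul, ← smul_eq_mul (P.real Aᶜ),
    ← setIntegral_const, ← setIntegral_const]
  exact integral_piecewise hA integrableOn_const integrableOn_const

variable {Φ : ℝ → EReal} {φ : ℝ → ℝ} {w z : ℝ}

lemma orliczPremium_ite (hΦφ : ∀ x, 0 ≤ x → Φ x = φ x) (hA : MeasurableSet A) (hw : 0 ≤ w)
    (hz : 0 ≤ z) :
    orliczPremium P Φ (fun ω => if ω ∈ A then w else z) =
      sInf {k | 0 < k ∧ P.real A * φ (w / k) + (1 - P.real A) * φ (z / k) ≤ 1} := by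
  rw [orliczPremium, if_neg fun h => EReal.coe_ne_bot _ (hΦφ 0 le_rfl ▸ h.1)]
  congr 1
  ext k
  refine and_congr_right fun hk => ?_
  have hΦX : (fun ω => Φ ((if ω ∈ A then w else z) / k)) =
      fun ω => ((if ω ∈ A then φ (w / k) else φ (z / k) : ℝ) : EReal) := by
    funext ω
    split_ifs
    exacts [hΦφ _ (div_nonneg hw hk.le), hΦφ _ (div_nonneg hz hk.le)]
  rw [hΦX, eexp_coe (integrable_ite_mem hA _ _), integral_ite_mem hA, ← EReal.coe_one,
    EReal.coe_le_coe_iff]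

lemma orliczPremium_ite_eq_iff (hΦφ : ∀ x, 0 ≤ x → Φ x = φ x) (hφ : StrictMonoOn φ (Ici 0))
    (hφc : ContinuousOn φ (Ici 0)) (hA : MeasurableSet A) (hPA : 0 < P.real A) (hw : 0 < w)
    (hz : 0 ≤ z) {k₀ : ℝ} (hk₀ : 0 < k₀) :
    orliczPremium P Φ (fun ω => if ω ∈ A then w else z) = k₀ ↔
      P.real A * φ (w / k₀) + (1 - P.real A) * φ (z / k₀) = 1 := by
  have hPA1 : 0 ≤ 1 - P.real A := sub_nonneg.2 measureReal_le_one
  have hanti {y : ℝ} (hy : 0 ≤ y) : AntitoneOn (fun k => φ (y / k)) (Ioi 0) :=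
    fun k hk k' hk' hkk' => hφ.monotoneOn (div_nonneg hy (le_of_lt hk'))
      (div_nonneg hy (le_of_lt hk)) (div_le_div_of_nonneg_left hy hk hkk')
  have hwanti : StrictAntiOn (fun k => φ (w / k)) (Ioi 0) :=
    fun k hk k' hk' hkk' => hφ (div_nonneg hw.le (le_of_lt hk'))
      (div_nonneg hw.le (le_of_lt hk)) (div_lt_div_of_pos_left hw hk hkk')
  have hG : StrictAntiOn (fun k => P.real A * φ (w / k) + (1 - P.real A) * φ (z / k))
      (Ioi 0) := fun k hk k' hk' hkk' => by
    nlinarith [hwanti hk hk' hkk', hanti hz hk hk' hkk'.le]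
  have hcont {y : ℝ} (hy : 0 ≤ y) : ContinuousOn (fun k => φ (y / k)) (Ioi 0) :=
    hφc.comp (continuousOn_const.div continuousOn_id fun k hk => (ne_of_gt hk))
      fun k hk => div_nonneg hy (le_of_lt hk)
  have hGc : ContinuousAt (fun k => P.real A * φ (w / k) + (1 - P.real A) * φ (z / k)) k₀ :=
    ((continuousOn_const.mul (hcont hw.le)).add
      (continuousOn_const.mul (hcont hz))).continuousAt (Ioi_mem_nhds hk₀)
  rw [orliczPremium_ite hΦφ hA hw.le hz]
  exact ⟨eq_of_csInf_setOf_le_eq hG.antitoneOn hGc hk₀, csInf_setOf_le_of_strictAntiOn hG hk₀⟩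

end Binary

/-- Cash-additivity on two-point variables: when `l φ u + (1 - l) φ v = 1`, i.e. the variable equal
to `u` with probability `l` and to `v` otherwise has premium `1`, its shift by `h` has premium
`1 + h`. -/
def ShiftsBinaryRoots (φ : ℝ → ℝ) : Prop :=
  ∀ l u v h : ℝ, 0 < l → l < 1 → 0 < u → 0 ≤ v → 0 ≤ h →
    l * φ u + (1 - l) * φ v = 1 →
      l * φ ((u + h) / (1 + h)) + (1 - l) * φ ((v + h) / (1 + h)) = 1

lemma shiftsBinaryRoots_of_cashAdditive {P : Measure Ω} [IsProbabilityMeasure P]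
    (hP : ∀ p : ℝ, 0 ≤ p → p ≤ 1 → ∃ A : Set Ω, MeasurableSet A ∧ P A = ENNReal.ofReal p)
    {Φ : ℝ → EReal} {φ : ℝ → ℝ} (hΦφ : ∀ x, 0 ≤ x → Φ x = φ x) (hφ : StrictMonoOn φ (Ici 0))
    (hφc : ContinuousOn φ (Ici 0))
    (hca : ∀ X : Ω → ℝ, MemLinftyPlus P X → ∀ h : ℝ, 0 ≤ h →
      orliczPremium P Φ (fun ω => X ω + h) = orliczPremium P Φ X + h) :
    ShiftsBinaryRoots φ := by
  classical
  intro l u v h hl0 hl1 hu hv hh hroot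
  obtain ⟨A, hA, hPA⟩ := hP l hl0.le hl1.le
  have hPAl : P.real A = l := by rw [measureReal_def, hPA, ENNReal.toReal_ofReal hl0.le]
  have hX : MemLinftyPlus P (fun ω => if ω ∈ A then u else v) :=
    ⟨measurable_const.ite hA measurable_const,
      ae_of_all _ fun ω => show 0 ≤ ite _ u v by split_ifs <;> linarith,
      ⟨max u v, ae_of_all _ fun ω => show ite _ u v ≤ _ by split_ifs <;> simp⟩⟩
  have hX1 : orliczPremium P Φ (fun ω => if ω ∈ A then u else v) = 1 :=
    (orliczPremium_ite_eq_iff hΦφ hφ hφc hA (hPAl ▸ hl0) hu hv one_pos).2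
      (by simpa only [hPAl, div_one] using hroot)
  have hXh := hca _ hX h hh
  simp only [ite_add, hX1] at hXh
  simpa only [hPAl] using (orliczPremium_ite_eq_iff hΦφ hφ hφc hA (hPAl ▸ hl0)
    (by positivity) (by positivity) (by positivity)).1 hXh

namespace ShiftsBinaryRoots

open Real

variable {φ : ℝ → ℝ} (hS : ShiftsBinaryRoots φ) (hφ : StrictMonoOn φ (Ici 0)) (hφ1 : φ 1 = 1)
include hS hφ hφ1

lemma sub_one_mul_one_sub_eq {t s r : ℝ} (ht : 0 < t) (hs0 : 0 < s) (hs1 : s ≤ 1) (hr0 : 0 < r)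
    (hr1 : r ≤ 1) :
    (φ (1 + r * t) - 1) * (1 - φ (1 - s)) = (φ (1 + t) - 1) * (1 - φ (1 - r * s)) := by
  have hf : 0 < φ (1 + t) - 1 := by
    have := hφ (mem_Ici.2 zero_le_one) (mem_Ici.2 (by linarith)) (by linarith : 1 < 1 + t)
    linarith
  have hg : 0 < 1 - φ (1 - s) := by
    have := hφ (mem_Ici.2 (by linarith)) (mem_Ici.2 zero_le_one) (by linarith : 1 - s < 1)
    linarith
  set l := (1 - φ (1 - s)) / ((φ (1 + t) - 1) + (1 - φ (1 - s))) with hl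
  have hl0 : 0 < l := by positivity
  have hl1 : l < 1 := (div_lt_one (by positivity)).2 (by linarith)
  have hroot : l * φ (1 + t) + (1 - l) * φ (1 - s) = 1 := by
    rw [hl]; field_simp; ring
  have hh : 0 ≤ 1 / r - 1 := by rw [sub_nonneg, le_div_iff₀ hr0]; linarith
  have hshift := hS l (1 + t) (1 - s) (1 / r - 1) hl0 hl1 (by linarith) (by linarith) hh hroot
  rw [show (1 + t + (1 / r - 1)) / (1 + (1 / r - 1)) = 1 + r * t by field_simp; ring,
    show (1 - s + (1 / r - 1)) / (1 + (1 / r - 1)) = 1 - r * s by field_simp; ring, hl] at hshift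
  field_simp at hshift
  rw [mul_comm t r, mul_comm s r] at hshift
  linear_combination hshift

lemma sub_one_mul_one_sub_eq_of_le_one {s : ℝ} (hs0 : 0 < s) (hs1 : s ≤ 1) :
    (φ 2 - 1) * (1 - φ (1 - s)) = (1 - φ 0) * (φ (1 + s) - 1) := by
  have h := hS.sub_one_mul_one_sub_eq hφ hφ1 one_pos one_pos le_rfl hs0 hs1
  simp only [mul_one, sub_self, one_add_one_eq_two] at h
  linear_combination -h

lemma exists_sub_one_eq_mul_rpow (hφc : ContinuousOn φ (Ici 0)) :
    ∃ p : ℝ, 0 < p ∧ ∀ x, 0 < x → φ (1 + x) - 1 = (φ 2 - 1) * x ^ p := by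
  have hφ_lt {x y : ℝ} (hx : 0 ≤ x) (hxy : x < y) : φ x < φ y := hφ hx (hx.trans hxy.le) hxy
  have ha : 0 < φ 2 - 1 := by linarith [hφ_lt zero_le_one one_lt_two]
  have hb : 0 < 1 - φ 0 := by linarith [hφ_lt le_rfl one_pos]
  set C : ℝ → ℝ := fun x => (φ (1 + x) - 1) / (φ 2 - 1)
  have hpos : ∀ x, 0 < x → 0 < C x := fun x hx =>
    div_pos (by linarith [hφ_lt zero_le_one (by linarith : 1 < 1 + x)]) ha
  have hmul : ∀ r t, 0 < r → r ≤ 1 → 0 < t → C (r * t) = C r * C t := fun r t hr0 hr1 ht => by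
    have h := hS.sub_one_mul_one_sub_eq hφ hφ1 ht one_pos le_rfl hr0 hr1
    have hr := hS.sub_one_mul_one_sub_eq_of_le_one hφ hφ1 hr0 hr1
    rw [mul_one, sub_self] at h
    have h' : (φ (1 + r * t) - 1) * (φ 2 - 1) = (φ (1 + t) - 1) * (φ (1 + r) - 1) :=
      mul_right_cancel₀ hb.ne' (by linear_combination (φ 2 - 1) * h + (φ (1 + t) - 1) * hr)
    simp only [C]
    field_simp
    linear_combination h'
  have hcont : ContinuousOn C (Ioi 0) :=
    ((hφc.comp (continuous_const.add continuous_id).continuousOn fun x hx =>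
      mem_Ici.2 (show (0 : ℝ) ≤ 1 + x by linarith [mem_Ioi.1 hx])).sub
        continuousOn_const).div_const _
  obtain ⟨p, hp⟩ := exists_rpow_of_map_mul hpos hcont fun x y hx hy =>
    map_mul_of_map_mul_of_le_one hpos hmul hx hy
  refine ⟨p, ?_, fun x hx => ?_⟩
  · by_contra! hp0
    have h12 : C 1 < C 2 :=
      div_lt_div_of_pos_right (sub_lt_sub_right (hφ_lt (by norm_num) (by norm_num)) 1) ha
    rw [hp 1 one_pos, hp 2 two_pos, one_rpow] at h12
    exact h12.not_ge (rpow_le_one_of_one_le_of_nonpos one_le_two hp0)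
  · rw [← hp x hx, mul_div_cancel₀ _ ha.ne']

lemma exists_eq_one_add_mul_rpow (hφc : ContinuousOn φ (Ici 0)) :
    ∃ a b p : ℝ, 0 < a ∧ 0 < b ∧ 0 < p ∧ ∀ x, 0 ≤ x →
      φ x = 1 + a * max (x - 1) 0 ^ p - b * max (1 - x) 0 ^ p := by
  obtain ⟨p, hp0, hp⟩ := hS.exists_sub_one_eq_mul_rpow hφ hφ1 hφc
  have ha : 0 < φ 2 - 1 := by
    linarith [hφ (mem_Ici.2 zero_le_one) (mem_Ici.2 zero_le_two) one_lt_two]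
  have hb : 0 < 1 - φ 0 := by
    linarith [hφ (mem_Ici.2 le_rfl) (mem_Ici.2 zero_le_one) one_pos]
  refine ⟨φ 2 - 1, 1 - φ 0, p, ha, hb, hp0, fun x hx => ?_⟩
  rcases lt_or_ge x 1 with hx1 | hx1
  · have h := hS.sub_one_mul_one_sub_eq_of_le_one hφ hφ1 (by linarith : 0 < 1 - x) (by linarith)
    rw [sub_sub_cancel, hp _ (by linarith)] at h
    rw [max_eq_right (by linarith), max_eq_left (by linarith), zero_rpow hp0.ne']
    exact mul_left_cancel₀ ha.ne' (by linear_combination -h)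
  · rcases hx1.eq_or_lt with rfl | hx1
    · simp [hφ1, zero_rpow hp0.ne']
    rw [max_eq_left (by linarith), max_eq_right (by linarith), zero_rpow hp0.ne',
      ← hp _ (by linarith), add_sub_cancel, add_sub_cancel, mul_zero, sub_zero]

end ShiftsBinaryRoots

lemma IsOrliczFunction.apply_one {Φ : ℝ → EReal} (hΦ : IsOrliczFunction Φ)
    (hc : ContinuousWithinAt Φ (Ioi 1) 1) : Φ 1 = 1 :=
  le_antisymm (hΦ.le_one 1 zero_le_one le_rfl)
    (ge_of_tendsto hc (eventually_nhdsWithin_of_forall fun x hx => (hΦ.one_lt x hx).le))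

/-- on a nonatomic probability space, if `Φ` is finite, continuous and
strictly increasing and `H_Φ` is cash-additive, then
`Φ(x) = 1 + a((x-1)₊)^p - b((x-1)₋)^p` for some `a, b > 0`, `p ≥ 0`. -/
theorem orliczPremium_cashAdditive_collapse
    (P : Measure Ω) [IsProbabilityMeasure P]
    (hP : ∀ p : ℝ, 0 ≤ p → p ≤ 1 →
      ∃ A : Set Ω, MeasurableSet A ∧ P A = ENNReal.ofReal p)
    (Φ : ℝ → EReal) (hΦ : IsOrliczFunction Φ)
    (hfin : ∀ x : ℝ, 0 ≤ x → Φ x ≠ ⊥ ∧ Φ x ≠ ⊤)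
    (hcont : ContinuousOn Φ (Set.Ici (0 : ℝ)))
    (hstrict : StrictMonoOn Φ (Set.Ici (0 : ℝ)))
    (hca : ∀ X : Ω → ℝ, MemLinftyPlus P X → ∀ h : ℝ, 0 ≤ h →
      orliczPremium P Φ (fun ω => X ω + h) = orliczPremium P Φ X + h) :
    ∃ a b p : ℝ, 0 < a ∧ 0 < b ∧ 0 ≤ p ∧
      ∀ x : ℝ, 0 ≤ x →
        Φ x = ((1 + a * (max (x - 1) 0) ^ p - b * (max (1 - x) 0) ^ p : ℝ) : EReal) := by
  set φ : ℝ → ℝ := fun x => (Φ x).toReal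
  have hΦφ : ∀ x, 0 ≤ x → Φ x = φ x := fun x hx =>
    (EReal.coe_toReal (hfin x hx).2 (hfin x hx).1).symm
  have hφ : StrictMonoOn φ (Ici 0) := fun x hx y hy hxy => EReal.coe_lt_coe_iff.1 <| by
    rw [← hΦφ x hx, ← hΦφ y hy]
    exact hstrict hx hy hxy
  have hφc : ContinuousOn φ (Ici 0) :=
    EReal.continuousOn_toReal.comp hcont fun x hx => by simp [(hfin x hx).1, (hfin x hx).2]
  have hφ1 : φ 1 = 1 := by
    simp [φ, hΦ.apply_one ((hcont 1 (mem_Ici.2 zero_le_one)).mono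
      fun x hx => mem_Ici.2 (zero_le_one.trans (le_of_lt hx)))]
  obtain ⟨a, b, p, ha, hb, hp, hform⟩ :=
    (shiftsBinaryRoots_of_cashAdditive hP hΦφ hφ hφc hca).exists_eq_one_add_mul_rpow hφ hφ1 hφc
  exact ⟨a, b, p, ha, hb, hp.le, fun x hx => by rw [hΦφ x hx, hform x hx]⟩
end
end

section
/- Let (Ω, F, P) be a probability space and let ρ : L∞₊ → [0,∞] be monotone (X ≤ Y P-a.s. implies ρ(X) ≤ ρ(Y)), positively homogeneous (ρ(λX) = λ·ρ(X) for all λ ≥ 0) and convex (ρ(αX + (1−α)Y) ≤ α·ρ(X) + (1−α)·ρ(Y) for α ∈ (0,1)). Then ρ is GG-convex: for all X, Y ∈ L∞₊ and λ ∈ (0,1), ρ(X^λ · Y^{1−λ}) ≤ ρ(X)^λ · ρ(Y)^{1−λ}. -/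
open MeasureTheory Filter Set
open scoped ENNReal

noncomputable section

variable {Ω : Type*} [MeasurableSpace Ω]

/-!
For positive `a ≥ ρ X` and `b ≥ ρ Y`, weighted AM–GM gives pointwise
`X^λ Y^{1-λ} ≤ a^λ b^{1-λ} (λ X / a + (1-λ) Y / b)`, and monotonicity, homogeneity and convexity
turn this into `ρ(X^λ Y^{1-λ}) ≤ a^λ b^{1-λ}`. Taking `a = ρ X + ε`, `b = ρ Y + ε` and letting
`ε → 0` covers vanishing values of `ρ`; infinite values are absorbed by the convention `0 · ∞ = ∞`.
-/

namespace MemLinftyPlus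

variable {P : Measure Ω} {X Y : Ω → ℝ}

lemma const_mul (hX : MemLinftyPlus P X) {c : ℝ} (hc : 0 ≤ c) :
    MemLinftyPlus P (fun ω => c * X ω) := by
  obtain ⟨mX, nX, CX, bX⟩ := hX
  refine ⟨measurable_const.mul mX, ?_, c * CX, ?_⟩
  · filter_upwards [nX] with ω h using mul_nonneg hc h
  · filter_upwards [bX] with ω h using mul_le_mul_of_nonneg_left h hc

lemma add (hX : MemLinftyPlus P X) (hY : MemLinftyPlus P Y) :
    MemLinftyPlus P (fun ω => X ω + Y ω) := by
  obtain ⟨mX, nX, CX, bX⟩ := hX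
  obtain ⟨mY, nY, CY, bY⟩ := hY
  refine ⟨mX.add mY, ?_, CX + CY, ?_⟩
  · filter_upwards [nX, nY] with ω h1 h2 using add_nonneg h1 h2
  · filter_upwards [bX, bY] with ω h1 h2 using add_le_add h1 h2

lemma rpow_mul_rpow (hX : MemLinftyPlus P X) (hY : MemLinftyPlus P Y) {p q : ℝ}
    (hp : 0 ≤ p) (hq : 0 ≤ q) : MemLinftyPlus P (fun ω => X ω ^ p * Y ω ^ q) := by
  obtain ⟨mX, nX, CX, bX⟩ := hX
  obtain ⟨mY, nY, CY, bY⟩ := hY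
  refine ⟨((Real.continuous_rpow_const hp).measurable.comp mX).mul
      ((Real.continuous_rpow_const hq).measurable.comp mY),
    ?_, max CX 0 ^ p * max CY 0 ^ q, ?_⟩
  · filter_upwards [nX, nY] with ω h1 h2 using by positivity
  · filter_upwards [nX, nY, bX, bY] with ω h1 h2 h3 h4
    gcongr
    exacts [h3.trans (le_max_left _ _), h4.trans (le_max_left _ _)]

end MemLinftyPlus

lemma rpow_mul_rpow_le_mul_weighted_mean {x y a b l : ℝ} (hx : 0 ≤ x) (hy : 0 ≤ y)
    (ha : 0 < a) (hb : 0 < b) (hl0 : 0 ≤ l) (hl1 : l ≤ 1) :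
    x ^ l * y ^ (1 - l) ≤ a ^ l * b ^ (1 - l) * (l * (a⁻¹ * x) + (1 - l) * (b⁻¹ * y)) := by
  calc x ^ l * y ^ (1 - l)
      = a ^ l * b ^ (1 - l) * ((a⁻¹ * x) ^ l * (b⁻¹ * y) ^ (1 - l)) := by
        rw [Real.mul_rpow (by positivity) hx, Real.mul_rpow (by positivity) hy,
          Real.inv_rpow ha.le, Real.inv_rpow hb.le]
        field_simp
    _ ≤ a ^ l * b ^ (1 - l) * (l * (a⁻¹ * x) + (1 - l) * (b⁻¹ * y)) := by
        gcongr
        exact Real.geom_mean_le_arith_mean2_weighted hl0 (by linarith) (by positivity)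
          (by positivity) (by ring)

lemma le_gmulE (a b : ℝ≥0∞) : a * b ≤ gmulE a b := by
  unfold gmulE
  split_ifs
  exacts [le_top, le_rfl]

lemma gmulE_top_left (b : ℝ≥0∞) : gmulE ⊤ b = ⊤ := by
  rcases eq_or_ne b 0 with rfl | hb
  · simp [gmulE]
  · simp [gmulE, ENNReal.top_mul hb]

lemma gmulE_top_right (a : ℝ≥0∞) : gmulE a ⊤ = ⊤ := by
  rcases eq_or_ne a 0 with rfl | ha
  · simp [gmulE]
  · simp [gmulE, ENNReal.mul_top ha]

def MonotoneOnLinftyPlus (P : Measure Ω) (ρ : (Ω → ℝ) → ℝ≥0∞) : Prop :=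
  ∀ X Y : Ω → ℝ, MemLinftyPlus P X → MemLinftyPlus P Y → (∀ᵐ ω ∂P, X ω ≤ Y ω) → ρ X ≤ ρ Y

def PosHomogeneousOnLinftyPlus (P : Measure Ω) (ρ : (Ω → ℝ) → ℝ≥0∞) : Prop :=
  ∀ X : Ω → ℝ, MemLinftyPlus P X → ∀ l : ℝ, 0 ≤ l →
    ρ (fun ω => l * X ω) = ENNReal.ofReal l * ρ X

def ConvexOnLinftyPlus (P : Measure Ω) (ρ : (Ω → ℝ) → ℝ≥0∞) : Prop :=
  ∀ X Y : Ω → ℝ, MemLinftyPlus P X → MemLinftyPlus P Y → ∀ a ∈ Set.Ioo (0 : ℝ) 1,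
    ρ (fun ω => a * X ω + (1 - a) * Y ω) ≤ ENNReal.ofReal a * ρ X + ENNReal.ofReal (1 - a) * ρ Y

lemma PosHomogeneousOnLinftyPlus.inv_mul_le_one {P : Measure Ω} {ρ : (Ω → ℝ) → ℝ≥0∞}
    (hhom : PosHomogeneousOnLinftyPlus P ρ) {Z : Ω → ℝ} (hZ : MemLinftyPlus P Z) {r : ℝ}
    (hr : 0 < r) (hZr : ρ Z ≤ ENNReal.ofReal r) : ρ (fun ω => r⁻¹ * Z ω) ≤ 1 := by
  rw [hhom Z hZ _ (inv_nonneg.2 hr.le)]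
  calc ENNReal.ofReal r⁻¹ * ρ Z ≤ ENNReal.ofReal r⁻¹ * ENNReal.ofReal r := by gcongr
    _ = 1 := by
      rw [← ENNReal.ofReal_mul (inv_nonneg.2 hr.le), inv_mul_cancel₀ hr.ne', ENNReal.ofReal_one]

section Functional

open scoped Topology

variable {P : Measure Ω} {ρ : (Ω → ℝ) → ℝ≥0∞}

lemma geomMix_le_of_le (hmono : MonotoneOnLinftyPlus P ρ)
    (hhom : PosHomogeneousOnLinftyPlus P ρ) (hconv : ConvexOnLinftyPlus P ρ)
    {X Y : Ω → ℝ} (hX : MemLinftyPlus P X) (hY : MemLinftyPlus P Y)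
    {l : ℝ} (hl : l ∈ Set.Ioo (0 : ℝ) 1) {a b : ℝ} (ha : 0 < a) (hb : 0 < b)
    (hXa : ρ X ≤ ENNReal.ofReal a) (hYb : ρ Y ≤ ENNReal.ofReal b) :
    ρ (fun ω => X ω ^ l * Y ω ^ (1 - l)) ≤ ENNReal.ofReal (a ^ l * b ^ (1 - l)) := by
  obtain ⟨hl0, hl1⟩ := hl
  set c := a ^ l * b ^ (1 - l)
  have hX' := hX.const_mul (inv_nonneg.2 ha.le)
  have hY' := hY.const_mul (inv_nonneg.2 hb.le)
  have hZ := (hX'.const_mul hl0.le).add (hY'.const_mul (sub_nonneg.2 hl1.le))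
  have hpointwise : ∀ᵐ ω ∂P, X ω ^ l * Y ω ^ (1 - l) ≤
      c * (l * (a⁻¹ * X ω) + (1 - l) * (b⁻¹ * Y ω)) := by
    filter_upwards [hX.2.1, hY.2.1] with ω hXω hYω
    exact rpow_mul_rpow_le_mul_weighted_mean hXω hYω ha hb hl0.le hl1.le
  calc ρ (fun ω => X ω ^ l * Y ω ^ (1 - l))
      ≤ ρ (fun ω => c * (l * (a⁻¹ * X ω) + (1 - l) * (b⁻¹ * Y ω))) :=
        hmono _ _ (hX.rpow_mul_rpow hY hl0.le (sub_nonneg.2 hl1.le))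
          (hZ.const_mul (by positivity)) hpointwise
    _ = ENNReal.ofReal c * ρ (fun ω => l * (a⁻¹ * X ω) + (1 - l) * (b⁻¹ * Y ω)) :=
        hhom _ hZ c (by positivity)
    _ ≤ ENNReal.ofReal c * (ENNReal.ofReal l * 1 + ENNReal.ofReal (1 - l) * 1) := by
        gcongr
        refine (hconv _ _ hX' hY' l ⟨hl0, hl1⟩).trans ?_
        gcongr
        exacts [hhom.inv_mul_le_one hX ha hXa, hhom.inv_mul_le_one hY hb hYb]
    _ = ENNReal.ofReal c := by
        rw [mul_one, mul_one, ← ENNReal.ofReal_add hl0.le (sub_nonneg.2 hl1.le),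
          add_sub_cancel, ENNReal.ofReal_one, mul_one]

lemma geomMix_le_rpow_mul_rpow (hmono : MonotoneOnLinftyPlus P ρ)
    (hhom : PosHomogeneousOnLinftyPlus P ρ) (hconv : ConvexOnLinftyPlus P ρ)
    {X Y : Ω → ℝ} (hX : MemLinftyPlus P X) (hY : MemLinftyPlus P Y)
    {l : ℝ} (hl : l ∈ Set.Ioo (0 : ℝ) 1) (hXt : ρ X ≠ ⊤) (hYt : ρ Y ≠ ⊤) :
    ρ (fun ω => X ω ^ l * Y ω ^ (1 - l)) ≤ ρ X ^ l * ρ Y ^ (1 - l) := by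
  obtain ⟨hl0, hl1⟩ := hl
  set x := (ρ X).toReal
  set y := (ρ Y).toReal
  have hx : 0 ≤ x := ENNReal.toReal_nonneg
  have hy : 0 ≤ y := ENNReal.toReal_nonneg
  have hcont : Continuous fun ε : ℝ => (x + ε) ^ l * (y + ε) ^ (1 - l) :=
    ((continuous_const_add x).rpow_const fun _ => Or.inr hl0.le).mul
      ((continuous_const_add y).rpow_const fun _ => Or.inr (sub_nonneg.2 hl1.le))
  have hlim : Tendsto (fun ε => ENNReal.ofReal ((x + ε) ^ l * (y + ε) ^ (1 - l))) (𝓝[>] 0)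
      (𝓝 (ENNReal.ofReal (x ^ l * y ^ (1 - l)))) :=
    ((ENNReal.continuous_ofReal.comp hcont).tendsto' 0 _ (by simp)).mono_left
      nhdsWithin_le_nhds
  have hbound : ∀ᶠ ε in 𝓝[>] (0 : ℝ), ρ (fun ω => X ω ^ l * Y ω ^ (1 - l)) ≤
      ENNReal.ofReal ((x + ε) ^ l * (y + ε) ^ (1 - l)) := by
    filter_upwards [self_mem_nhdsWithin] with ε (hε : 0 < ε)
    refine geomMix_le_of_le hmono hhom hconv hX hY ⟨hl0, hl1⟩ (by positivity) (by positivity)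
      ?_ ?_
    · rw [← ENNReal.ofReal_toReal hXt]; gcongr; linarith
    · rw [← ENNReal.ofReal_toReal hYt]; gcongr; linarith
  calc ρ (fun ω => X ω ^ l * Y ω ^ (1 - l)) ≤ ENNReal.ofReal (x ^ l * y ^ (1 - l)) :=
        ge_of_tendsto hlim hbound
    _ = ρ X ^ l * ρ Y ^ (1 - l) := by
        rw [ENNReal.ofReal_mul (by positivity), ← ENNReal.ofReal_rpow_of_nonneg hx hl0.le,
          ← ENNReal.ofReal_rpow_of_nonneg hy (sub_nonneg.2 hl1.le), ENNReal.ofReal_toReal hXt,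
          ENNReal.ofReal_toReal hYt]

end Functional

theorem ggConvex_of_monotone_posHom_convex_general
    (P : Measure Ω) (ρ : (Ω → ℝ) → ℝ≥0∞)
    (hmono : ∀ X Y : Ω → ℝ, MemLinftyPlus P X → MemLinftyPlus P Y →
      (∀ᵐ ω ∂P, X ω ≤ Y ω) → ρ X ≤ ρ Y)
    (hhom : ∀ X : Ω → ℝ, MemLinftyPlus P X → ∀ l : ℝ, 0 ≤ l →
      ρ (fun ω => l * X ω) = ENNReal.ofReal l * ρ X)
    (hconv : ∀ X Y : Ω → ℝ, MemLinftyPlus P X → MemLinftyPlus P Y →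
      ∀ a ∈ Set.Ioo (0 : ℝ) 1,
        ρ (fun ω => a * X ω + (1 - a) * Y ω) ≤
          ENNReal.ofReal a * ρ X + ENNReal.ofReal (1 - a) * ρ Y) :
    ∀ X Y : Ω → ℝ, MemLinftyPlus P X → MemLinftyPlus P Y →
      ∀ l ∈ Set.Ioo (0 : ℝ) 1,
        ρ (fun ω => X ω ^ l * Y ω ^ (1 - l)) ≤
          gmulE (ρ X ^ l) (ρ Y ^ (1 - l)) := by
  intro X Y hX hY l hl
  by_cases hXt : ρ X = ⊤
  · rw [hXt, ENNReal.top_rpow_of_pos hl.1, gmulE_top_left]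
    exact le_top
  by_cases hYt : ρ Y = ⊤
  · rw [hYt, ENNReal.top_rpow_of_pos (sub_pos.2 hl.2), gmulE_top_right]
    exact le_top
  exact (geomMix_le_rpow_mul_rpow hmono hhom hconv hX hY hl hXt hYt).trans (le_gmulE _ _)

/-- a monotone, positively homogeneous and convex functional
`ρ : L∞₊ → [0,∞]` is GG-convex (with the convention `0 ⬝ ∞ = ∞`). -/
theorem ggConvex_of_monotone_posHom_convex
    (P : Measure Ω) [IsProbabilityMeasure P] (ρ : (Ω → ℝ) → ℝ≥0∞)
    (hmono : ∀ X Y : Ω → ℝ, MemLinftyPlus P X → MemLinftyPlus P Y →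
      (∀ᵐ ω ∂P, X ω ≤ Y ω) → ρ X ≤ ρ Y)
    (hhom : ∀ X : Ω → ℝ, MemLinftyPlus P X → ∀ l : ℝ, 0 ≤ l →
      ρ (fun ω => l * X ω) = ENNReal.ofReal l * ρ X)
    (hconv : ∀ X Y : Ω → ℝ, MemLinftyPlus P X → MemLinftyPlus P Y →
      ∀ a ∈ Set.Ioo (0 : ℝ) 1,
        ρ (fun ω => a * X ω + (1 - a) * Y ω) ≤
          ENNReal.ofReal a * ρ X + ENNReal.ofReal (1 - a) * ρ Y) :
    ∀ X Y : Ω → ℝ, MemLinftyPlus P X → MemLinftyPlus P Y →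
      ∀ l ∈ Set.Ioo (0 : ℝ) 1,
        ρ (fun ω => X ω ^ l * Y ω ^ (1 - l)) ≤
          gmulE (ρ X ^ l) (ρ Y ^ (1 - l)) :=
  ggConvex_of_monotone_posHom_convex_general P ρ hmono hhom hconv
end
end

section
/- Let Φ be an Orlicz function and H_Φ the associated Orlicz premium on L∞₊. If Φ is GA-convex, then H_Φ is GG-convex: for all X, Y ∈ L∞₊ and λ ∈ (0,1), H_Φ(X^λ · Y^{1−λ}) ≤ H_Φ(X)^λ · H_Φ(Y)^{1−λ}. -/
open MeasureTheory Filter Set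
open scoped ENNReal

noncomputable section

variable {Ω : Type*} [MeasurableSpace Ω]

/-! For `Z = X ^ l * Y ^ (1 - l)` and `k = k₁ ^ l * k₂ ^ (1 - l)`, GA-convexity gives pointwise
`Φ(Z / k) ≤ l Φ(X / k₁) + (1 - l) Φ(Y / k₂)`; taking expectations, `k` is admissible for `Z`
whenever `k₁` and `k₂` are admissible for `X` and `Y`, and letting `k₁ ↓ H_Φ(X)`, `k₂ ↓ H_Φ(Y)`
gives the claim. Expectations only fail to combine when `E[Φ(X / k₁)⁻] = ∞`. Then, since `Y / k₂`
is bounded, `Z / k ≤ c (X / k₁) ^ l`, and GA-convexity between `X / k₁` and `1` forces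
`E[Φ(Z / k)⁻] = ∞` as well, so that `E[Φ(Z / k)] = -∞`. -/

lemma ofReal_posNeg_le_of_le_convexComb {a b c l : ℝ} (hl₀ : 0 ≤ l) (hl₁ : l ≤ 1)
    (h : c ≤ l * a + (1 - l) * b) :
    ENNReal.ofReal c + ENNReal.ofReal l * ENNReal.ofReal (-a)
        + ENNReal.ofReal (1 - l) * ENNReal.ofReal (-b)
      ≤ ENNReal.ofReal l * ENNReal.ofReal a + ENNReal.ofReal (1 - l) * ENNReal.ofReal b
        + ENNReal.ofReal (-c) := by
  rw [← ENNReal.toReal_le_toReal (by finiteness) (by finiteness)]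
  simp only [ENNReal.toReal_add, ENNReal.toReal_mul, ENNReal.toReal_ofReal', ne_eq,
    ENNReal.mul_eq_top, ENNReal.ofReal_ne_top, false_and, and_false, or_self,
    not_false_eq_true, ENNReal.add_eq_top]
  rw [max_eq_left hl₀, max_eq_left (sub_nonneg.mpr hl₁)]
  linear_combination h + max_zero_sub_max_neg_zero_eq_self c
    - l * max_zero_sub_max_neg_zero_eq_self a - (1 - l) * max_zero_sub_max_neg_zero_eq_self b

namespace EReal

@[simp] lemma toENNReal_one : (1 : EReal).toENNReal = 1 := by
  rw [← coe_one, real_coe_toENNReal, ENNReal.ofReal_one]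

lemma toENNReal_posNeg_le_of_le_convexComb {a b c : EReal} {l : ℝ} (hl : l ∈ Ioo (0 : ℝ) 1)
    (ha : a ≠ ⊥) (hb : b ≠ ⊥) (h : c ≤ (l : EReal) * a + ((1 - l : ℝ) : EReal) * b) :
    c.toENNReal + ENNReal.ofReal l * (-a).toENNReal + ENNReal.ofReal (1 - l) * (-b).toENNReal
      ≤ ENNReal.ofReal l * a.toENNReal + ENNReal.ofReal (1 - l) * b.toENNReal
        + (-c).toENNReal := by
  have hl₀ : ENNReal.ofReal l ≠ 0 := by simpa using hl.1
  have hl₁ : ENNReal.ofReal (1 - l) ≠ 0 := by simpa using hl.2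
  induction a using EReal.rec with
  | bot => exact absurd rfl ha
  | top => simp [ENNReal.mul_top hl₀]
  | coe a =>
  induction b using EReal.rec with
  | bot => exact absurd rfl hb
  | top => simp [ENNReal.mul_top hl₁]
  | coe b =>
  induction c using EReal.rec with
  | bot => simp
  | top => exact absurd h (not_le.mpr (by exact_mod_cast coe_lt_top (l * a + (1 - l) * b)))
  | coe c =>
    simp only [← coe_neg, real_coe_toENNReal]
    exact ofReal_posNeg_le_of_le_convexComb hl.1.le hl.2.le (by exact_mod_cast h)

end EReal

section Expectation

variable {P : Measure Ω}

lemma eexp_eq (f : Ω → EReal) :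
    eexp P f = (∫⁻ ω, (f ω).toENNReal ∂P : ℝ≥0∞) - (∫⁻ ω, (-f ω).toENNReal ∂P : ℝ≥0∞) :=
  rfl

lemma eexp_le_one_iff {f : Ω → EReal} :
    eexp P f ≤ 1 ↔ ∫⁻ ω, (f ω).toENNReal ∂P ≤ 1 + ∫⁻ ω, (-f ω).toENNReal ∂P := by
  rw [eexp_eq, EReal.sub_le_iff_le_add (.inl (EReal.coe_ennreal_ne_bot _))
    (.inr (ne_bot_of_gt zero_lt_one)), ← EReal.coe_ennreal_one, ← EReal.coe_ennreal_add,
    EReal.coe_ennreal_le_coe_ennreal_iff]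

lemma eexp_mono {f g : Ω → EReal} (h : ∀ᵐ ω ∂P, f ω ≤ g ω) : eexp P f ≤ eexp P g := by
  simp only [eexp_eq]
  refine EReal.sub_le_sub ?_ ?_ <;> refine EReal.coe_ennreal_le_coe_ennreal_iff.mpr
    (lintegral_mono_ae (h.mono fun ω hω => EReal.toENNReal_le_toENNReal ?_))
  exacts [hω, EReal.neg_le_neg_iff.mpr hω]

lemma eexp_le_one_of_ae_le_one [IsProbabilityMeasure P] {f : Ω → EReal}
    (h : ∀ᵐ ω ∂P, f ω ≤ 1) : eexp P f ≤ 1 := by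
  refine eexp_le_one_iff.mpr (le_add_right ?_)
  calc ∫⁻ ω, (f ω).toENNReal ∂P ≤ ∫⁻ _, 1 ∂P :=
        lintegral_mono_ae (h.mono fun ω hω => EReal.toENNReal_one ▸ EReal.toENNReal_le_toENNReal hω)
    _ = 1 := by simp

/-- `eexp P f ≤ 1` carries no information once `∫ f⁻ = ∞`; `hf_top` and `hg_top` cover
that case. -/
lemma eexp_le_one_of_le_convexComb {l : ℝ} (hl : l ∈ Ioo (0 : ℝ) 1) {f g h : Ω → EReal}
    (hfm : AEMeasurable f P) (hgm : AEMeasurable g P)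
    (hf_bot : ∀ᵐ ω ∂P, f ω ≠ ⊥) (hg_bot : ∀ᵐ ω ∂P, g ω ≠ ⊥)
    (hle : ∀ᵐ ω ∂P, h ω ≤ (l : EReal) * f ω + ((1 - l : ℝ) : EReal) * g ω)
    (hf : eexp P f ≤ 1) (hg : eexp P g ≤ 1)
    (hf_top : ∫⁻ ω, (-f ω).toENNReal ∂P = ⊤ → ∫⁻ ω, (-h ω).toENNReal ∂P = ⊤)
    (hg_top : ∫⁻ ω, (-g ω).toENNReal ∂P = ⊤ → ∫⁻ ω, (-h ω).toENNReal ∂P = ⊤) :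
    eexp P h ≤ 1 := by
  rw [eexp_le_one_iff] at hf hg ⊢
  set Af := ∫⁻ ω, (f ω).toENNReal ∂P
  set Bf := ∫⁻ ω, (-f ω).toENNReal ∂P
  set Ag := ∫⁻ ω, (g ω).toENNReal ∂P
  set Bg := ∫⁻ ω, (-g ω).toENNReal ∂P
  set Bh := ∫⁻ ω, (-h ω).toENNReal ∂P
  by_cases hBh : Bh = ⊤
  · simp [hBh]
  have hBf : Bf ≠ ⊤ := mt hf_top hBh
  have hBg : Bg ≠ ⊤ := mt hg_top hBh
  set a := ENNReal.ofReal l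
  set b := ENNReal.ofReal (1 - l)
  have hab : a + b = 1 := by
    rw [← ENNReal.ofReal_add hl.1.le (sub_nonneg.mpr hl.2.le)]; simp
  have hsum : AEMeasurable (fun ω => a * (f ω).toENNReal + b * (g ω).toENNReal) P :=
    (hfm.ereal_toENNReal.const_mul _).add (hgm.ereal_toENNReal.const_mul _)
  have hint : ∫⁻ ω, (h ω).toENNReal ∂P + a * Bf + b * Bg ≤ a * Af + b * Ag + Bh :=
    calc ∫⁻ ω, (h ω).toENNReal ∂P + a * Bf + b * Bg
        ≤ ∫⁻ ω, (h ω).toENNReal + a * (-f ω).toENNReal + b * (-g ω).toENNReal ∂P := by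
          rw [← lintegral_const_mul' _ _ ENNReal.ofReal_ne_top,
            ← lintegral_const_mul' _ _ ENNReal.ofReal_ne_top]
          exact (add_le_add (le_lintegral_add _ _) le_rfl).trans (le_lintegral_add _ _)
      _ ≤ ∫⁻ ω, a * (f ω).toENNReal + b * (g ω).toENNReal + (-h ω).toENNReal ∂P :=
          lintegral_mono_ae <| by
            filter_upwards [hf_bot, hg_bot, hle] with ω hfω hgω hω
            exact EReal.toENNReal_posNeg_le_of_le_convexComb hl hfω hgω hω
      _ = a * Af + b * Ag + Bh := by
          rw [lintegral_add_left' hsum, lintegral_add_left' (hfm.ereal_toENNReal.const_mul _),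
            lintegral_const_mul' _ _ ENNReal.ofReal_ne_top,
            lintegral_const_mul' _ _ ENNReal.ofReal_ne_top]
  refine (ENNReal.add_le_add_iff_right (by finiteness : a * Bf + b * Bg ≠ ⊤)).mp ?_
  calc ∫⁻ ω, (h ω).toENNReal ∂P + (a * Bf + b * Bg)
      ≤ a * Af + b * Ag + Bh := by rw [← add_assoc]; exact hint
    _ ≤ a * (1 + Bf) + b * (1 + Bg) + Bh := by gcongr
    _ = (a + b) + Bh + (a * Bf + b * Bg) := by ring
    _ = 1 + Bh + (a * Bf + b * Bg) := by rw [hab]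

end Expectation

section

def IsGAConvex (Φ : ℝ → EReal) : Prop :=
  ∀ x y : ℝ, 0 ≤ x → 0 ≤ y → ∀ l ∈ Set.Ioo (0 : ℝ) 1,
    Φ (x ^ l * y ^ (1 - l)) ≤ eadd ((l : EReal) * Φ x) (((1 - l : ℝ) : EReal) * Φ y)

variable {Φ : ℝ → EReal} {P : Measure Ω}

namespace IsOrliczFunction

lemma ae_ne_bot_div (hΦ : IsOrliczFunction Φ) {X : Ω → ℝ} (hX0 : ∀ᵐ ω ∂P, 0 ≤ X ω)
    (hXΦ : ∀ᵐ ω ∂P, 0 < X ω ∨ Φ 0 ≠ ⊥) {k : ℝ} (hk : 0 < k) : ∀ᵐ ω ∂P, Φ (X ω / k) ≠ ⊥ := by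
  filter_upwards [hX0, hXΦ] with ω hx h
  rcases hx.eq_or_lt with hx | hx
  · simpa [← hx] using h
  · exact hΦ.ne_bot _ (div_pos hx hk)

lemma aemeasurable_comp (hΦ : IsOrliczFunction Φ) {U : Ω → ℝ} (hU : AEMeasurable U P)
    (hU0 : ∀ᵐ ω ∂P, 0 ≤ U ω) : AEMeasurable (fun ω => Φ (U ω)) P := by
  have hmono : Monotone fun t : ℝ => Φ (max t 0) := fun s t hst =>
    hΦ.mono _ _ (le_max_right _ _) (max_le_max hst le_rfl)
  refine (hmono.measurable.comp_aemeasurable hU).congr ?_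
  filter_upwards [hU0] with ω hω
  simp [max_eq_left hω]

end IsOrliczFunction

namespace IsGAConvex

lemma le_convexComb (hGA : IsGAConvex Φ) {x y l : ℝ} (hx : 0 ≤ x) (hy : 0 ≤ y)
    (hl : l ∈ Ioo (0 : ℝ) 1) (hΦx : Φ x ≠ ⊥) (hΦy : Φ y ≠ ⊥) :
    Φ (x ^ l * y ^ (1 - l)) ≤ (l : EReal) * Φ x + ((1 - l : ℝ) : EReal) * Φ y := by
  have hmul {t : ℝ} (ht : 0 ≤ t) {a : EReal} (ha : a ≠ ⊥) : (t : EReal) * a ≠ ⊥ :=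
    (EReal.mul_ne_bot _ _).mpr ⟨.inl (EReal.coe_ne_bot t), .inr ha, .inl (EReal.coe_ne_top t),
      .inl (EReal.coe_nonneg.mpr ht)⟩
  have h := hGA x y hx hy l hl
  rwa [eadd, if_neg] at h
  have := hmul hl.1.le hΦx
  have := hmul (sub_nonneg.mpr hl.2.le) hΦy
  tauto

/-- GA-convexity between `u` and `1` makes `Φ(u ^ ν)` at most `ν Φ(u) + 1`. -/
lemma mul_toENNReal_neg_le (hΦ : IsOrliczFunction Φ) (hGA : IsGAConvex Φ) {ν u w : ℝ}
    (hν : ν ∈ Ioo (0 : ℝ) 1) (hu : 0 ≤ u) (hw : 0 ≤ w) (hwu : w ≤ u ^ ν) (hΦu : Φ u ≠ ⊥) :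
    ENNReal.ofReal ν * (-Φ u).toENNReal ≤ (-Φ w).toENNReal + 1 := by
  rcases lt_or_ge 0 (Φ u) with hpos | hnonpos
  · simp [EReal.toENNReal_of_nonpos (EReal.neg_le_zero.mpr hpos.le)]
  have hΦ1 := hΦ.ne_bot 1 one_pos
  have hconv : Φ w ≤ (ν : EReal) * Φ u + ((1 - ν : ℝ) : EReal) * Φ 1 :=
    calc Φ w ≤ Φ (u ^ ν * 1 ^ (1 - ν)) := by
          rw [Real.one_rpow, mul_one]; exact hΦ.mono _ _ hw hwu
      _ ≤ _ := hGA.le_convexComb hu zero_le_one hν hΦu hΦ1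
  have hΦ1_le : (Φ 1).toENNReal ≤ 1 := by
    simpa using EReal.toENNReal_le_toENNReal (hΦ.le_one 1 zero_le_one le_rfl)
  have h1ν : ENNReal.ofReal (1 - ν) ≤ 1 := ENNReal.ofReal_le_one.mpr (by linarith [hν.1])
  calc ENNReal.ofReal ν * (-Φ u).toENNReal
      ≤ (Φ w).toENNReal + ENNReal.ofReal ν * (-Φ u).toENNReal
          + ENNReal.ofReal (1 - ν) * (-Φ 1).toENNReal := le_add_right le_add_self
    _ ≤ ENNReal.ofReal ν * (Φ u).toENNReal + ENNReal.ofReal (1 - ν) * (Φ 1).toENNReal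
          + (-Φ w).toENNReal := EReal.toENNReal_posNeg_le_of_le_convexComb hν hΦu hΦ1 hconv
    _ ≤ ENNReal.ofReal ν * 0 + 1 * 1 + (-Φ w).toENNReal := by
        rw [EReal.toENNReal_of_nonpos hnonpos]; gcongr
    _ = (-Φ w).toENNReal + 1 := by ring

/-- If `W ≤ c U ^ μ`, the negative part of `Φ ∘ W` is not integrable as soon as that of `Φ ∘ U`
is not: where `U` is small, `W ≤ U ^ (μ / 2)` and `mul_toENNReal_neg_le` applies; elsewhere
`-Φ ∘ U` is bounded. -/
lemma lintegral_toENNReal_neg_eq_top (hΦ : IsOrliczFunction Φ) (hGA : IsGAConvex Φ)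
    [IsFiniteMeasure P] {μ c : ℝ} (hμ : μ ∈ Ioo (0 : ℝ) 1) (hc : 0 < c) {U W : Ω → ℝ}
    (hU0 : ∀ᵐ ω ∂P, 0 ≤ U ω) (hW0 : ∀ᵐ ω ∂P, 0 ≤ W ω) (hWU : ∀ᵐ ω ∂P, W ω ≤ c * U ω ^ μ)
    (hU_bot : ∀ᵐ ω ∂P, Φ (U ω) ≠ ⊥) (hU_top : ∫⁻ ω, (-Φ (U ω)).toENNReal ∂P = ⊤) :
    ∫⁻ ω, (-Φ (W ω)).toENNReal ∂P = ⊤ := by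
  obtain ⟨ν, hν, rfl⟩ : ∃ ν ∈ Ioo (0 : ℝ) 1, μ = ν + ν :=
    ⟨μ / 2, ⟨by linarith [hμ.1], by linarith [hμ.2]⟩, (add_halves μ).symm⟩
  set ε := c⁻¹ ^ ν⁻¹
  have hε : 0 < ε := by positivity
  have hcε : c * ε ^ ν = 1 := by
    rw [Real.rpow_inv_rpow (inv_nonneg.mpr hc.le) hν.1.ne', mul_inv_cancel₀ hc.ne']
  set K := 1 + ENNReal.ofReal ν * (-Φ ε).toENNReal
  have hK : K ≠ ⊤ := by
    have := EReal.toENNReal_ne_top_iff.mpr (EReal.neg_eq_top_iff.not.mpr (hΦ.ne_bot ε hε))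
    finiteness
  have hbound : ∀ᵐ ω ∂P, ENNReal.ofReal ν * (-Φ (U ω)).toENNReal ≤ (-Φ (W ω)).toENNReal + K := by
    filter_upwards [hU0, hW0, hWU, hU_bot] with ω hu hw hwu hbot
    rcases le_or_gt (U ω) ε with hsmall | hlarge
    · have hWν : W ω ≤ U ω ^ ν :=
        calc W ω ≤ c * U ω ^ (ν + ν) := hwu
          _ = c * U ω ^ ν * U ω ^ ν := by
              rw [mul_assoc, ← Real.rpow_add' hu (by linarith [hν.1])]
          _ ≤ 1 * U ω ^ ν := by
              gcongr
              exact hcε ▸ mul_le_mul_of_nonneg_left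
                (Real.rpow_le_rpow hu hsmall hν.1.le) hc.le
          _ = U ω ^ ν := one_mul _
      exact (hGA.mul_toENNReal_neg_le hΦ hν hu hw hWν hbot).trans (by gcongr; exact le_self_add)
    · calc ENNReal.ofReal ν * (-Φ (U ω)).toENNReal ≤ ENNReal.ofReal ν * (-Φ ε).toENNReal := by
            gcongr
            exact EReal.toENNReal_le_toENNReal
              (EReal.neg_le_neg_iff.mpr (hΦ.mono _ _ hε.le hlarge.le))
        _ ≤ (-Φ (W ω)).toENNReal + K := le_add_left le_add_self
  have hν0 : ENNReal.ofReal ν ≠ 0 := by simpa using hν.1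
  have htop : ⊤ ≤ ∫⁻ ω, (-Φ (W ω)).toENNReal ∂P + K * P univ :=
    calc ⊤ = ENNReal.ofReal ν * ∫⁻ ω, (-Φ (U ω)).toENNReal ∂P := by
          rw [hU_top, ENNReal.mul_top hν0]
      _ = ∫⁻ ω, ENNReal.ofReal ν * (-Φ (U ω)).toENNReal ∂P :=
          (lintegral_const_mul' _ _ ENNReal.ofReal_ne_top).symm
      _ ≤ ∫⁻ ω, (-Φ (W ω)).toENNReal + K ∂P := lintegral_mono_ae hbound
      _ = ∫⁻ ω, (-Φ (W ω)).toENNReal ∂P + K * P univ := by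
          rw [lintegral_add_right _ measurable_const, lintegral_const]
  by_contra hne
  exact (by finiteness : ∫⁻ ω, (-Φ (W ω)).toENNReal ∂P + K * P univ ≠ ⊤) (top_le_iff.mp htop)

end IsGAConvex

lemma MemLinftyPlus.exists_pos_bound {X : Ω → ℝ} (hX : MemLinftyPlus P X) :
    ∃ C > 0, ∀ᵐ ω ∂P, X ω ≤ C := by
  obtain ⟨C, hC⟩ := hX.2.2
  exact ⟨max C 1, by positivity, hC.mono fun ω h => h.trans (le_max_left _ _)⟩

def admissibleLevels (P : Measure Ω) (Φ : ℝ → EReal) (X : Ω → ℝ) : Set ℝ :=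
  {k : ℝ | 0 < k ∧ eexp P (fun ω => Φ (X ω / k)) ≤ 1}

section Premium

variable {X : Ω → ℝ}

lemma orliczPremium_nonneg : 0 ≤ orliczPremium P Φ X := by
  unfold orliczPremium
  split_ifs
  exacts [le_rfl, Real.sInf_nonneg fun k hk => hk.1.le]

lemma orliczPremium_eq_sInf (h : ¬(Φ 0 = ⊥ ∧ 0 < P {ω | X ω = 0})) :
    orliczPremium P Φ X = sInf (admissibleLevels P Φ X) :=
  if_neg h

lemma admissibleLevels_bddBelow : BddBelow (admissibleLevels P Φ X) :=
  ⟨0, fun _ hk => hk.1.le⟩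

lemma mem_admissibleLevels_of_le (hΦ : IsOrliczFunction Φ) (hX0 : ∀ᵐ ω ∂P, 0 ≤ X ω) {k k' : ℝ}
    (hk : k ∈ admissibleLevels P Φ X) (hkk' : k ≤ k') : k' ∈ admissibleLevels P Φ X := by
  have hk' := hk.1.trans_le hkk'
  refine ⟨hk', (eexp_mono ?_).trans hk.2⟩
  filter_upwards [hX0] with ω hω
  exact hΦ.mono _ _ (div_nonneg hω hk'.le) (div_le_div_of_nonneg_left hω hk.1 hkk')

lemma admissibleLevels_nonempty [IsProbabilityMeasure P] (hΦ : IsOrliczFunction Φ)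
    (hX : MemLinftyPlus P X) : (admissibleLevels P Φ X).Nonempty := by
  obtain ⟨C, hC, hXC⟩ := hX.exists_pos_bound
  refine ⟨C, hC, eexp_le_one_of_ae_le_one ?_⟩
  filter_upwards [hX.2.1, hXC] with ω h0 h1
  exact (hΦ.mono _ _ (div_nonneg h0 hC.le) ((div_le_one hC).mpr h1)).trans
    (hΦ.le_one 1 zero_le_one le_rfl)

lemma mem_admissibleLevels_of_orliczPremium_lt [IsProbabilityMeasure P]
    (hΦ : IsOrliczFunction Φ) (hX : MemLinftyPlus P X)
    (h : ¬(Φ 0 = ⊥ ∧ 0 < P {ω | X ω = 0})) {k : ℝ} (hk : orliczPremium P Φ X < k) :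
    k ∈ admissibleLevels P Φ X := by
  rw [orliczPremium_eq_sInf h] at hk
  obtain ⟨k₀, hk₀, hk₀k⟩ :=
    (csInf_lt_iff admissibleLevels_bddBelow (admissibleLevels_nonempty hΦ hX)).mp hk
  exact mem_admissibleLevels_of_le hΦ hX.2.1 hk₀ hk₀k.le

lemma ae_pos_or_ne_bot (hX0 : ∀ᵐ ω ∂P, 0 ≤ X ω) (h : ¬(Φ 0 = ⊥ ∧ 0 < P {ω | X ω = 0})) :
    ∀ᵐ ω ∂P, 0 < X ω ∨ Φ 0 ≠ ⊥ := by
  by_cases h0 : Φ 0 = ⊥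
  · have hzero : P {ω | X ω = 0} = 0 := by simpa [h0] using h
    filter_upwards [hX0, measure_eq_zero_iff_ae_notMem.mp hzero] with ω h1 h2
    exact .inl (h1.lt_of_ne' h2)
  · exact .of_forall fun _ => .inr h0

end Premium

theorem IsGAConvex.rpow_mul_rpow_mem_admissibleLevels [IsFiniteMeasure P]
    (hΦ : IsOrliczFunction Φ) (hGA : IsGAConvex Φ) {X Y : Ω → ℝ}
    (hX : MemLinftyPlus P X) (hY : MemLinftyPlus P Y)
    (hXΦ : ∀ᵐ ω ∂P, 0 < X ω ∨ Φ 0 ≠ ⊥) (hYΦ : ∀ᵐ ω ∂P, 0 < Y ω ∨ Φ 0 ≠ ⊥)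
    {l k₁ k₂ : ℝ} (hl : l ∈ Ioo (0 : ℝ) 1)
    (hk₁ : k₁ ∈ admissibleLevels P Φ X) (hk₂ : k₂ ∈ admissibleLevels P Φ Y) :
    k₁ ^ l * k₂ ^ (1 - l) ∈ admissibleLevels P Φ (fun ω => X ω ^ l * Y ω ^ (1 - l)) := by
  obtain ⟨hk₁, hX_exp⟩ := hk₁
  obtain ⟨hk₂, hY_exp⟩ := hk₂
  have hl' : 1 - l ∈ Ioo (0 : ℝ) 1 := ⟨sub_pos.mpr hl.2, by linarith [hl.1]⟩
  obtain ⟨CX, hCX, hXC⟩ := hX.exists_pos_bound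
  obtain ⟨CY, hCY, hYC⟩ := hY.exists_pos_bound
  have hU0 : ∀ᵐ ω ∂P, 0 ≤ X ω / k₁ := hX.2.1.mono fun ω h => div_nonneg h hk₁.le
  have hV0 : ∀ᵐ ω ∂P, 0 ≤ Y ω / k₂ := hY.2.1.mono fun ω h => div_nonneg h hk₂.le
  have hW : ∀ᵐ ω ∂P, X ω ^ l * Y ω ^ (1 - l) / (k₁ ^ l * k₂ ^ (1 - l))
      = (X ω / k₁) ^ l * (Y ω / k₂) ^ (1 - l) := by
    filter_upwards [hX.2.1, hY.2.1] with ω hx hy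
    rw [Real.div_rpow hx hk₁.le, Real.div_rpow hy hk₂.le, mul_div_mul_comm]
  have hW0 : ∀ᵐ ω ∂P, 0 ≤ X ω ^ l * Y ω ^ (1 - l) / (k₁ ^ l * k₂ ^ (1 - l)) := by
    filter_upwards [hW, hU0, hV0] with ω hω hu hv
    rw [hω]; positivity
  have hf_bot := hΦ.ae_ne_bot_div hX.2.1 hXΦ hk₁
  have hg_bot := hΦ.ae_ne_bot_div hY.2.1 hYΦ hk₂
  refine ⟨by positivity, eexp_le_one_of_le_convexComb hl
    (hΦ.aemeasurable_comp (hX.1.div_const k₁).aemeasurable hU0)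
    (hΦ.aemeasurable_comp (hY.1.div_const k₂).aemeasurable hV0)
    hf_bot hg_bot ?_ hX_exp hY_exp ?_ ?_⟩
  · filter_upwards [hW, hU0, hV0, hf_bot, hg_bot] with ω hω hu hv hf hg
    rw [hω]
    exact hGA.le_convexComb hu hv hl hf hg
  · refine hGA.lintegral_toENNReal_neg_eq_top hΦ hl (by positivity : 0 < (CY / k₂) ^ (1 - l))
      hU0 hW0 ?_ hf_bot
    filter_upwards [hW, hU0, hV0, hYC] with ω hω hu hv hy
    rw [hω, mul_comm]
    gcongr
    exact hl'.1.le
  · refine hGA.lintegral_toENNReal_neg_eq_top hΦ hl' (by positivity : 0 < (CX / k₁) ^ l)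
      hV0 hW0 ?_ hg_bot
    filter_upwards [hW, hU0, hV0, hXC] with ω hω hu hv hx
    rw [hω]
    gcongr
    exact hl.1.le

lemma le_rpow_mul_rpow_of_forall_lt {a b c l : ℝ} (hl₀ : 0 ≤ l) (hl₁ : l ≤ 1)
    (h : ∀ x > a, ∀ y > b, c ≤ x ^ l * y ^ (1 - l)) : c ≤ a ^ l * b ^ (1 - l) := by
  have hcont : ContinuousAt (fun δ : ℝ => (a + δ) ^ l * (b + δ) ^ (1 - l)) 0 :=
    ((continuousAt_const.add continuousAt_id).rpow_const (.inr hl₀)).mul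
      ((continuousAt_const.add continuousAt_id).rpow_const (.inr (sub_nonneg.mpr hl₁)))
  have hlim := hcont.tendsto.mono_left (nhdsWithin_le_nhds (s := Ioi 0))
  simp only [add_zero] at hlim
  exact ge_of_tendsto hlim (eventually_nhdsWithin_of_forall fun δ hδ =>
    h _ (lt_add_of_pos_right a hδ) _ (lt_add_of_pos_right b hδ))

end

/-- if the Orlicz function `Φ` is GA-convex, then `H_Φ` is GG-convex. -/
theorem orliczPremium_ggConvex_of_gaConvex
    (P : Measure Ω) [IsProbabilityMeasure P] (Φ : ℝ → EReal)
    (hΦ : IsOrliczFunction Φ)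
    (hGA : ∀ x y : ℝ, 0 ≤ x → 0 ≤ y → ∀ l ∈ Set.Ioo (0 : ℝ) 1,
      Φ (x ^ l * y ^ (1 - l)) ≤
        eadd ((l : EReal) * Φ x) (((1 - l : ℝ) : EReal) * Φ y)) :
    ∀ X Y : Ω → ℝ, MemLinftyPlus P X → MemLinftyPlus P Y →
      ∀ l ∈ Set.Ioo (0 : ℝ) 1,
        orliczPremium P Φ (fun ω => X ω ^ l * Y ω ^ (1 - l)) ≤
          orliczPremium P Φ X ^ l * orliczPremium P Φ Y ^ (1 - l) := by
  intro X Y hX hY l hl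
  by_cases hZ : Φ 0 = ⊥ ∧ 0 < P {ω | X ω ^ l * Y ω ^ (1 - l) = 0}
  · rw [orliczPremium, if_pos hZ]
    exact mul_nonneg (Real.rpow_nonneg orliczPremium_nonneg _)
      (Real.rpow_nonneg orliczPremium_nonneg _)
  have hX' : ¬(Φ 0 = ⊥ ∧ 0 < P {ω | X ω = 0}) := fun h => hZ ⟨h.1, h.2.trans_le
    (measure_mono fun ω (hω : X ω = 0) => by simp [hω, hl.1.ne'])⟩
  have hY' : ¬(Φ 0 = ⊥ ∧ 0 < P {ω | Y ω = 0}) := fun h => hZ ⟨h.1, h.2.trans_le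
    (measure_mono fun ω (hω : Y ω = 0) => by simp [hω, (sub_pos.mpr hl.2).ne'])⟩
  rw [orliczPremium_eq_sInf hZ]
  refine le_rpow_mul_rpow_of_forall_lt hl.1.le hl.2.le fun k₁ hk₁ k₂ hk₂ =>
    csInf_le admissibleLevels_bddBelow ?_
  exact IsGAConvex.rpow_mul_rpow_mem_admissibleLevels hΦ hGA hX hY
    (ae_pos_or_ne_bot hX.2.1 hX') (ae_pos_or_ne_bot hY.2.1 hY') hl
    (mem_admissibleLevels_of_orliczPremium_lt hΦ hX hX' hk₁)
    (mem_admissibleLevels_of_orliczPremium_lt hΦ hY hY' hk₂)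
end
end
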